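/- Let K = ℚ(ζ_k) for some primitive k-th root of unity ζ_k with k ≥ 2, and let I be a nonzero fractional ideal of O_K. Then the lattice Λ_K(I) = σ(I) ⊂ ℝ^{φ(k)} is well-rounded. -/

import Mathlib

/-!
Since `σ(I)` is discrete, the minimum is attained at some nonzero `x ∈ I`. Every infinite place
takes the value `1` at the root of unity `ζ`, so all `ζⁿ x ∈ I` are minimal vectors too. As
`K = ℚ(ζ)` they span `K` over `ℚ`, and `σ(K)` spans `ℝ^d` over `ℝ` because `σ` maps an integral
basis of `K` to an `ℝ`-basis.
-/

open NumberField
open scoped nonZeroDivisors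

/-- The squared Euclidean norm of the image of `x : K` under the embedding
`σ : K → ℝ^d`, `σ(x) = (σ₁(x),…,σ_{r₁}(x), Re τ₁(x), Im τ₁(x),…)`; it equals
the sum over all infinite places `w` of `K` of `(w x)^2`. -/
noncomputable def sqNorm (K : Type*) [Field K] [NumberField K] (x : K) : ℝ :=
  ∑ w : InfinitePlace K, (w x) ^ 2

/-- The minimum `|Λ|` of the lattice `σ(S)`: the infimum of the squared Euclidean
norms of images of nonzero elements of `S ⊆ K`. -/
noncomputable def latMin (K : Type*) [Field K] [NumberField K] (S : Set K) : ℝ :=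
  sInf {r : ℝ | ∃ x ∈ S, x ≠ 0 ∧ sqNorm K x = r}

/-- The elements of `S ⊆ K` whose images under `σ` are minimal vectors of the
lattice `σ(S)`. -/
def minVecs (K : Type*) [Field K] [NumberField K] (S : Set K) : Set K :=
  {x ∈ S | sqNorm K x = latMin K S}

/-- The lattice `σ(S) ⊆ ℝ^d` is well-rounded: its minimal vectors span `ℝ^d`
(identified with the mixed space `ℝ^{r₁} × ℂ^{r₂}`). -/
def IsWellRounded (K : Type*) [Field K] [NumberField K] (S : Set K) : Prop :=
  Submodule.span ℝ (mixedEmbedding K '' minVecs K S) = ⊤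

theorem Submodule.span_range_pow_mul_eq_top {F E : Type*} [Field F] [Field E] [Algebra F E]
    {ζ : E} (hgen : Algebra.adjoin F {ζ} = ⊤) {x : E} (hx : x ≠ 0) :
    Submodule.span F (Set.range fun n : ℕ ↦ ζ ^ n * x) = ⊤ := by
  have hpow : Submodule.span F (Set.range fun n : ℕ ↦ ζ ^ n) = ⊤ := by
    rw [← Submonoid.coe_powers, Submonoid.powers_eq_closure, ← Algebra.adjoin_eq_span, hgen,
      Algebra.top_toSubmodule]
  have hsurj : Function.Surjective (LinearMap.mulRight F x) := fun y ↦
    ⟨y * x⁻¹, by simp [hx]⟩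
  rw [← LinearMap.range_eq_top.mpr hsurj, LinearMap.range_eq_map, ← hpow, Submodule.map_span,
    ← Set.range_comp]
  rfl

theorem NumberField.InfinitePlace.apply_eq_one_of_pow_eq_one {K : Type*} [Field K]
    (w : InfinitePlace K) {x : K} {k : ℕ} (hk : k ≠ 0) (hx : x ^ k = 1) : w x = 1 :=
  (pow_eq_one_iff_of_nonneg (apply_nonneg w x) hk).mp (by rw [← map_pow, hx, map_one])

namespace NumberField

open scoped Classical

variable {K : Type*} [Field K] [NumberField K]

theorem sqNorm_mul_of_forall_place_eq_one {u : K} (hu : ∀ w : InfinitePlace K, w u = 1)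
    (x : K) : sqNorm K (u * x) = sqNorm K x := by
  simp only [sqNorm, map_mul, hu, one_mul]

theorem norm_mixedEmbedding_le_sqrt_sqNorm (x : K) :
    ‖mixedEmbedding K x‖ ≤ √(sqNorm K x) := by
  rw [mixedEmbedding.norm_eq_sup'_normAtPlace]
  refine Finset.sup'_le _ _ fun w _ ↦ ?_
  rw [mixedEmbedding.normAtPlace_apply]
  refine (Real.le_sqrt (apply_nonneg w x) (Finset.sum_nonneg fun _ _ ↦ sq_nonneg _)).mpr ?_
  exact Finset.single_le_sum (f := fun w : InfinitePlace K ↦ (w x) ^ 2)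
    (fun _ _ ↦ sq_nonneg _) (Finset.mem_univ w)

theorem finite_setOf_mem_fractionalIdeal_sqNorm_le {I : FractionalIdeal (𝓞 K)⁰ K} (hI : I ≠ 0)
    (r : ℝ) : {x : K | x ∈ I ∧ sqNorm K x ≤ r}.Finite := by
  let L := (mixedEmbedding.idealLattice K (Units.mk0 I hI)).toAddSubgroup
  have : DiscreteTopology L := inferInstanceAs
    (DiscreteTopology (mixedEmbedding.idealLattice K (Units.mk0 I hI)))
  have hL : IsClosed (L : Set (mixedEmbedding.mixedSpace K)) := L.isClosed_of_discrete
  refine Set.Finite.of_finite_image ?_ (mixedEmbedding_injective K).injOn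
  refine (Metric.finite_isBounded_inter_isClosed DiscreteTopology.isDiscrete
    (Metric.isBounded_closedBall (x := 0) (r := √r)) hL).subset ?_
  rintro - ⟨x, ⟨hxI, hxr⟩, rfl⟩
  refine ⟨?_, (mixedEmbedding.mem_idealLattice K _).mpr ⟨x, hxI, rfl⟩⟩
  rw [Metric.mem_closedBall, dist_zero_right]
  exact (norm_mixedEmbedding_le_sqrt_sqNorm x).trans (Real.sqrt_le_sqrt hxr)

theorem exists_sqNorm_eq_latMin {S : Set K} (hfin : ∀ r, {x | x ∈ S ∧ sqNorm K x ≤ r}.Finite)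
    {y : K} (hyS : y ∈ S) (hy0 : y ≠ 0) : ∃ x ∈ S, x ≠ 0 ∧ sqNorm K x = latMin K S := by
  obtain ⟨x, ⟨⟨hxS, hxy⟩, hx0⟩, hmin⟩ :=
    Set.exists_min_image (s := {x | (x ∈ S ∧ sqNorm K x ≤ sqNorm K y) ∧ x ≠ 0}) (sqNorm K)
      ((hfin _).subset fun _ h ↦ h.1) ⟨y, ⟨hyS, le_rfl⟩, hy0⟩
  suffices IsLeast {r | ∃ x ∈ S, x ≠ 0 ∧ sqNorm K x = r} (sqNorm K x) from
    ⟨x, hxS, hx0, this.csInf_eq.symm⟩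
  refine ⟨⟨x, hxS, hx0, rfl⟩, ?_⟩
  rintro _ ⟨z, hzS, hz0, rfl⟩
  by_cases hzy : sqNorm K z ≤ sqNorm K y
  · exact hmin z ⟨⟨hzS, hzy⟩, hz0⟩
  · exact hxy.trans (le_of_not_ge hzy)

theorem span_real_mixedEmbedding_eq_top {S : Set K} (hS : Submodule.span ℚ S = ⊤) :
    Submodule.span ℝ (mixedEmbedding K '' S) = ⊤ := by
  have hK (x : K) : mixedEmbedding K x ∈ Submodule.span ℝ (mixedEmbedding K '' S) := by
    have hx := Submodule.mem_map_of_mem (f := (mixedEmbedding K).toRatAlgHom.toLinearMap)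
      (hS ▸ Submodule.mem_top : x ∈ Submodule.span ℚ S)
    rw [Submodule.map_span] at hx
    exact Submodule.span_le_restrictScalars ℚ ℝ _ hx
  rw [eq_top_iff, ← (mixedEmbedding.latticeBasis K).span_eq, Submodule.span_le]
  rintro - ⟨i, rfl⟩
  rw [mixedEmbedding.latticeBasis_apply]
  exact hK _

end NumberField

/-- If `K = ℚ(ζ_k)` for a primitive `k`-th root of unity `ζ_k`, `k ≥ 2`, and `I`
is a nonzero fractional ideal of `O_K`, then the lattice `Λ_K(I) = σ(I)` is
well-rounded. -/
theorem statement6 (K : Type*) [Field K] [NumberField K] (k : ℕ) (hk : 2 ≤ k)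
    (ζ : K) (hζ : IsPrimitiveRoot ζ k) (hgen : Algebra.adjoin ℚ {ζ} = ⊤)
    (I : FractionalIdeal (𝓞 K)⁰ K) (hI : I ≠ 0) :
    IsWellRounded K ((I : Submodule (𝓞 K) K) : Set K) := by
  obtain ⟨y, hyI, hy0⟩ : ∃ y ∈ I, y ≠ 0 := by
    simpa using mt FractionalIdeal.eq_zero_iff.mpr hI
  obtain ⟨x, hxI, hx0, hxmin⟩ :=
    exists_sqNorm_eq_latMin (S := (I : Submodule (𝓞 K) K))
      (finite_setOf_mem_fractionalIdeal_sqNorm_le hI) hyI hy0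
  have hζO : IsIntegral ℤ ζ := hζ.isIntegral (by omega)
  have hζw (w : InfinitePlace K) : w ζ = 1 :=
    w.apply_eq_one_of_pow_eq_one (by omega) hζ.pow_eq_one
  have hpow : Set.range (fun n : ℕ ↦ ζ ^ n * x) ⊆ minVecs K (I : Submodule (𝓞 K) K) := by
    rintro - ⟨n, rfl⟩
    refine ⟨(I : Submodule (𝓞 K) K).smul_mem ⟨ζ ^ n, hζO.pow n⟩ hxI, ?_⟩
    rw [sqNorm_mul_of_forall_place_eq_one (fun w ↦ by rw [map_pow, hζw, one_pow]), hxmin]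
  exact eq_top_mono (Submodule.span_mono (Set.image_mono hpow))
    (span_real_mixedEmbedding_eq_top (Submodule.span_range_pow_mul_eq_top hgen hx0))
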